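/- arXiv:1412.4898 — 4 statements merged into one kernel-verified Lean document; each statement's English description precedes it below -/
import Mathlib

section
/- (Theorem 1) Let (Ω, ℱ, P) be a probability space, Π a nonempty finite set, α ≥ 0, K ∈ ℝ, N ≥ 1 a natural number, and ε > α. For each π ∈ Π, let Y^π_1, …, Y^π_N be independent identically distributed random variables taking values in [0,1] with mean J(π) := E[Y^π_1], and let Z^π_1, …, Z^π_N be random variables taking values in [0,1] such that |Y^π_n − Z^π_n| ≤ α almost surely for every n. Define Ĵ_N(π) := (1/N) ∑_{n=1}^N Z^π_n, the estimated feasible set Π_{f,N} := {π ∈ Π : Ĵ_N(π) ≤ K}, and for δ ∈ ℝ the set Π_f^δ := {π ∈ Π : J(π) ≤ K + δ}. Then P(Π_f^{−ε} ⊆ Π_{f,N} ∧ Π_{f,N} ⊆ Π_f^ε) ≥ 1 − 2 · |Π| · exp(−2(ε − α)² N). -/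
/-
By Hoeffding's inequality, for each policy `π` the sample mean `(1/N) ∑ₙ Y^π_n` is within
`ε - α` of `J π` outside an event of probability at most `2 exp (-2 (ε - α)² N)`. Since each
`Z^π_n` is within `α` of `Y^π_n` almost surely, outside the union of these `|Π|` events every
estimate satisfies `|Ĵ_N(π) - J(π)| < ε`, and this forces `Π_f^{-ε} ⊆ Π_{f,N} ⊆ Π_f^ε`.
-/

open MeasureTheory ProbabilityTheory

section Hoeffding

open Finset Real

variable {Ω ι : Type*} [MeasurableSpace Ω] {P : Measure Ω} [IsProbabilityMeasure P]
  {X : ι → Ω → ℝ} {a b : ℝ}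

lemma measureReal_sum_sub_integral_ge_le (hind : iIndepFun X P)
    (hmeas : ∀ i, AEMeasurable (X i) P) (hX : ∀ i, ∀ᵐ ω ∂P, X i ω ∈ Set.Icc a b)
    (s : Finset ι) {t : ℝ} (ht : 0 ≤ t) :
    P.real {ω | t ≤ ∑ i ∈ s, (X i ω - P[X i])} ≤ exp (-2 * t ^ 2 / (#s * (b - a) ^ 2)) := by
  have hcentered : iIndepFun (fun i ω ↦ X i ω - P[X i]) P :=
    hind.comp (fun i (y : ℝ) ↦ y - ∫ ω, X i ω ∂P) fun _ ↦ measurable_id.sub_const _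
  refine (HasSubgaussianMGF.measure_sum_ge_le_of_iIndepFun hcentered
    (fun i _ ↦ hasSubgaussianMGF_of_mem_Icc (hmeas i) (hX i)) ht).trans_eq ?_
  push_cast
  rw [sum_const, nsmul_eq_mul, Real.norm_eq_abs, div_pow, sq_abs,
    show 2 * (#s * ((b - a) ^ 2 / 2 ^ 2)) = #s * (b - a) ^ 2 / 2 by ring, div_div_eq_mul_div]
  ring_nf

lemma measureReal_abs_sum_sub_integral_ge_le (hind : iIndepFun X P)
    (hmeas : ∀ i, AEMeasurable (X i) P) (hX : ∀ i, ∀ᵐ ω ∂P, X i ω ∈ Set.Icc a b)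
    (s : Finset ι) {t : ℝ} (ht : 0 ≤ t) :
    P.real {ω | t ≤ |∑ i ∈ s, (X i ω - P[X i])|} ≤ 2 * exp (-2 * t ^ 2 / (#s * (b - a) ^ 2)) := by
  have hupper := measureReal_sum_sub_integral_ge_le hind hmeas hX s ht
  have hlower := measureReal_sum_sub_integral_ge_le (X := fun i ω ↦ -X i ω)
    (hind.comp (fun _ x ↦ -x) fun _ ↦ measurable_neg) (fun i ↦ (hmeas i).neg)
    (fun i ↦ (hX i).mono fun ω hω ↦ ⟨neg_le_neg hω.2, neg_le_neg hω.1⟩) s ht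
  have hneg (ω : Ω) : ∑ i ∈ s, (-X i ω - P[fun ω ↦ -X i ω]) = -∑ i ∈ s, (X i ω - P[X i]) := by
    rw [← sum_neg_distrib]
    refine sum_congr rfl fun i _ ↦ ?_
    rw [integral_neg]
    ring
  simp only [hneg, neg_sub_neg] at hlower
  calc _ ≤ P.real ({ω | t ≤ ∑ i ∈ s, (X i ω - P[X i])} ∪
        {ω | t ≤ -∑ i ∈ s, (X i ω - P[X i])}) := by
        refine measureReal_mono fun ω hω ↦ ?_
        rcases le_abs'.1 (show t ≤ |_| from hω) with h | h
        exacts [.inr (le_neg_of_le_neg h), .inl h]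
    _ ≤ _ := measureReal_union_le _ _
    _ ≤ _ := add_le_add hupper hlower
    _ = _ := by ring

end Hoeffding

lemma one_sub_measureReal_le_of_ae_mem_or_mem {Ω : Type*} [MeasurableSpace Ω] {P : Measure Ω}
    [IsProbabilityMeasure P] {A B : Set Ω} (h : ∀ᵐ ω ∂P, ω ∈ A ∨ ω ∈ B) :
    1 - P.real B ≤ P.real A := by
  have hunion : P.real (A ∪ B) = 1 := by
    have hfull : (A ∪ B : Set Ω) =ᵐ[P] (Set.univ : Set Ω) := Filter.eventuallyEq_univ.2 h
    rw [measureReal_congr hfull, probReal_univ]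
  linarith [measureReal_union_le (μ := P) A B]

open Finset in
lemma abs_sum_div_card_sub_lt {ι : Type*} {s : Finset ι} (hs : s.Nonempty) {y z : ι → ℝ}
    {m δ α : ℝ} (hy : |∑ i ∈ s, (y i - m)| < #s * δ) (hyz : ∀ i ∈ s, |y i - z i| ≤ α) :
    |(∑ i ∈ s, z i) / #s - m| < δ + α := by
  have hcard : (0 : ℝ) < #s := by exact_mod_cast hs.card_pos
  have hsplit : ∑ i ∈ s, z i - #s * m = ∑ i ∈ s, (y i - m) + ∑ i ∈ s, (z i - y i) := by
    simp only [sub_add_sub_cancel', sum_sub_distrib, sum_const, nsmul_eq_mul]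
  have hmean : (∑ i ∈ s, z i) / #s - m = (∑ i ∈ s, z i - #s * m) / #s := by field_simp
  rw [hmean, abs_div, abs_of_pos hcard, div_lt_iff₀ hcard, hsplit]
  calc |∑ i ∈ s, (y i - m) + ∑ i ∈ s, (z i - y i)|
      ≤ |∑ i ∈ s, (y i - m)| + ∑ i ∈ s, |z i - y i| :=
        (abs_add_le _ _).trans (by gcongr; exact abs_sum_le_sum_abs _ _)
    _ < #s * δ + #s * α := by
        refine add_lt_add_of_lt_of_le hy ?_
        simpa using sum_le_card_nsmul s _ α fun i hi ↦ abs_sub_comm (z i) (y i) ▸ hyz i hi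
    _ = (δ + α) * #s := by ring

theorem stmt5_general {Ω : Type*} [MeasurableSpace Ω] (P : Measure Ω) [IsProbabilityMeasure P]
    {Pol : Type*} [Fintype Pol]
    (α : ℝ) (K : ℝ) (N : ℕ) (hN : 0 < N) (ε : ℝ) (hε : α < ε)
    (Y Z : Pol → Fin N → Ω → ℝ)
    (hYmeas : ∀ π n, Measurable (Y π n))
    (hYindep : ∀ π, iIndepFun (Y π) P)
    (hYid : ∀ π n, IdentDistrib (Y π n) (Y π ⟨0, hN⟩) P P)
    (hY01 : ∀ π n ω, Y π n ω ∈ Set.Icc (0 : ℝ) 1)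
    (hYZ : ∀ π n, ∀ᵐ ω ∂P, |Y π n ω - Z π n ω| ≤ α)
    (J : Pol → ℝ) (hJ : ∀ π, J π = ∫ ω, Y π ⟨0, hN⟩ ω ∂P)
    (Jhat : Pol → Ω → ℝ) (hJhat : ∀ π ω, Jhat π ω = (∑ n, Z π n ω) / N)
    (PfN : Ω → Set Pol) (hPfN : ∀ ω, PfN ω = {π | Jhat π ω ≤ K})
    (Pf : ℝ → Set Pol) (hPf : ∀ δ : ℝ, Pf δ = {π | J π ≤ K + δ}) :
    1 - 2 * (Fintype.card Pol) * Real.exp (-2 * (ε - α) ^ 2 * N)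
      ≤ (P {ω | Pf (-ε) ⊆ PfN ω ∧ PfN ω ⊆ Pf ε}).toReal := by
  have hNpos : (0 : ℝ) < N := by exact_mod_cast hN
  have hmean (π : Pol) (n : Fin N) : P[Y π n] = J π := (hJ π).symm ▸ (hYid π n).integral_eq
  set bad : Pol → Set Ω := fun π ↦ {ω | N * (ε - α) ≤ |∑ n, (Y π n ω - P[Y π n])|}
  have hbad (π : Pol) : P.real (bad π) ≤ 2 * Real.exp (-2 * (ε - α) ^ 2 * N) := by
    have hdev : 0 ≤ N * (ε - α) := mul_nonneg hNpos.le (sub_nonneg.2 hε.le)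
    refine (measureReal_abs_sum_sub_integral_ge_le (hYindep π)
      (fun n ↦ (hYmeas π n).aemeasurable) (fun n ↦ ae_of_all _ (hY01 π n)) _ hdev).trans_eq ?_
    congr 2
    rw [Finset.card_univ, Fintype.card_fin]
    field_simp
    ring
  have hcover : ∀ᵐ ω ∂P, ω ∈ {ω | Pf (-ε) ⊆ PfN ω ∧ PfN ω ⊆ Pf ε} ∨ ω ∈ ⋃ π, bad π := by
    filter_upwards [ae_all_iff.2 fun π ↦ ae_all_iff.2 (hYZ π)] with ω hω
    refine or_iff_not_imp_right.2 fun hnotbad ↦ ?_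
    simp only [bad, Set.mem_iUnion, Set.mem_ofPred_eq, not_exists, not_le, hmean] at hnotbad
    have hclose (π : Pol) : |Jhat π ω - J π| < ε := by
      have := abs_sum_div_card_sub_lt ⟨⟨0, hN⟩, Finset.mem_univ _⟩ (by simpa using hnotbad π)
        fun n _ ↦ hω π n
      rw [hJhat]
      simpa using this
    simp only [hPf, hPfN]
    constructor <;> intro π hπ <;> simp only [Set.mem_ofPred_eq] at hπ ⊢ <;>
      linarith [abs_lt.1 (hclose π)]
  calc 1 - 2 * (Fintype.card Pol) * Real.exp (-2 * (ε - α) ^ 2 * N)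
      = 1 - ∑ _π : Pol, 2 * Real.exp (-2 * (ε - α) ^ 2 * N) := by
        rw [Finset.sum_const, Finset.card_univ, nsmul_eq_mul]
        ring
    _ ≤ 1 - P.real (⋃ π, bad π) :=
        sub_le_sub_left ((measureReal_iUnion_fintype_le _).trans
          (Finset.sum_le_sum fun π _ ↦ hbad π)) 1
    _ ≤ _ := one_sub_measureReal_le_of_ae_mem_or_mem hcover

/-- Theorem 1 of the paper (abstract form): the estimated feasible set
`Π_{f,N} = {π : Ĵ_N(π) ≤ K}`, built from sample means of truncated constraint-value
samples, is sandwiched between the `(-ε)`-feasible and `ε`-feasible policy sets with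
probability at least `1 - 2 |Π| exp(-2(ε-α)² N)`, for any `ε` exceeding the truncation
error `α`. -/
theorem stmt5 {Ω : Type*} [MeasurableSpace Ω] (P : Measure Ω) [IsProbabilityMeasure P]
    {Pol : Type*} [Fintype Pol] [Nonempty Pol]
    (α : ℝ) (hα : 0 ≤ α) (K : ℝ) (N : ℕ) (hN : 0 < N) (ε : ℝ) (hε : α < ε)
    (Y Z : Pol → Fin N → Ω → ℝ)
    (hYmeas : ∀ π n, Measurable (Y π n)) (hZmeas : ∀ π n, Measurable (Z π n))
    (hYindep : ∀ π, iIndepFun (Y π) P)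
    (hYid : ∀ π n, IdentDistrib (Y π n) (Y π ⟨0, hN⟩) P P)
    (hY01 : ∀ π n ω, Y π n ω ∈ Set.Icc (0 : ℝ) 1)
    (hZ01 : ∀ π n ω, Z π n ω ∈ Set.Icc (0 : ℝ) 1)
    (hYZ : ∀ π n, ∀ᵐ ω ∂P, |Y π n ω - Z π n ω| ≤ α)
    (J : Pol → ℝ) (hJ : ∀ π, J π = ∫ ω, Y π ⟨0, hN⟩ ω ∂P)
    (Jhat : Pol → Ω → ℝ) (hJhat : ∀ π ω, Jhat π ω = (∑ n, Z π n ω) / N)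
    (PfN : Ω → Set Pol) (hPfN : ∀ ω, PfN ω = {π | Jhat π ω ≤ K})
    (Pf : ℝ → Set Pol) (hPf : ∀ δ : ℝ, Pf δ = {π | J π ≤ K + δ}) :
    1 - 2 * (Fintype.card Pol) * Real.exp (-2 * (ε - α) ^ 2 * N)
      ≤ (P {ω | Pf (-ε) ⊆ PfN ω ∧ PfN ω ⊆ Pf ε}).toReal :=
  stmt5_general P α K N hN ε hε Y Z hYmeas hYindep hYid hY01 hYZ J hJ Jhat hJhat PfN hPfN Pf hPf
end

section
/- Let (Ω, ℱ, P) be a probability space, Π a nonempty finite set, α ≥ 0, K ∈ ℝ, N ≥ 1 a natural number, and ε > α. For each π ∈ Π, let Y^π_1, …, Y^π_N be independent identically distributed random variables taking values in [0,1] with mean J(π) := E[Y^π_1], and let Z^π_1, …, Z^π_N be random variables taking values in [0,1] such that |Y^π_n − Z^π_n| ≤ α almost surely for every n. Define Ĵ_N(π) := (1/N) ∑_{n=1}^N Z^π_n and Π_{f,N} := {π ∈ Π : Ĵ_N(π) ≤ K}. Suppose that {π ∈ Π : J(π) ≤ K + ε} = ∅. Then P(Π_{f,N} = ∅) ≥ 1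 − 2 · |Π| · exp(−2(ε − α)² N). -/
/-!
Since every `J π` exceeds `K + ε`, the estimate `Ĵ_N(π) ≤ K` can only happen if the sample
mean of the `Z π n` lies more than `ε` below `J π`; as the `Z π n` are within `α` of the
`Y π n`, the sample mean of the `Y π n` then lies more than `ε - α` below its expectation.
Hoeffding's inequality bounds this by `exp (-2 (ε - α)² N)` for each policy, and a union
bound over the finitely many policies bounds the probability that some policy is estimated
feasible.
-/

open MeasureTheory ProbabilityTheory

section Hoeffding

variable {Ω ι : Type*} [MeasurableSpace Ω] {μ : Measure Ω} [IsProbabilityMeasure μ] [Fintype ι]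
  {X : ι → Ω → ℝ}

lemma measureReal_sum_le_sum_integral_sub_le (hindep : iIndepFun X μ)
    (hmeas : ∀ i, AEMeasurable (X i) μ) (h01 : ∀ i, ∀ᵐ ω ∂μ, X i ω ∈ Set.Icc (0 : ℝ) 1)
    {t : ℝ} (ht : 0 ≤ t) :
    μ.real {ω | ∑ i, X i ω ≤ ∑ i, μ[X i] - t} ≤ Real.exp (-2 * t ^ 2 / Fintype.card ι) := by
  have hsubG : ∀ i ∈ Finset.univ,
      HasSubgaussianMGF (fun ω ↦ μ[X i] - X i ω) (1 / 4) μ := fun i _ ↦ by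
    convert (hasSubgaussianMGF_of_mem_Icc (hmeas i) (h01 i)).neg using 1
    · ext ω; simp
    · norm_num
  have hindep' : iIndepFun (fun i ω ↦ μ[X i] - X i ω) μ :=
    hindep.comp (fun i (x : ℝ) ↦ ∫ ω, X i ω ∂μ - x) fun _ ↦ measurable_const.sub measurable_id
  calc μ.real {ω | ∑ i, X i ω ≤ ∑ i, μ[X i] - t}
      = μ.real {ω | t ≤ ∑ i, (μ[X i] - X i ω)} := by
        simp only [Finset.sum_sub_distrib]
        congr with ω
        constructor <;> intro h <;> linarith
    _ ≤ Real.exp (-t ^ 2 / (2 * ((∑ _i : ι, 1 / 4 : NNReal) : ℝ))) :=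
        HasSubgaussianMGF.measure_sum_ge_le_of_iIndepFun hindep' hsubG ht
    _ = Real.exp (-2 * t ^ 2 / Fintype.card ι) := by
        rw [Finset.sum_const, Finset.card_univ, nsmul_eq_mul]
        push_cast
        congr 1
        ring

lemma measureReal_sum_le_sum_integral_sub_le_of_ae_abs_sub_le {Z : ι → Ω → ℝ} {α : ℝ}
    (hindep : iIndepFun X μ)
    (hmeas : ∀ i, AEMeasurable (X i) μ) (h01 : ∀ i, ∀ᵐ ω ∂μ, X i ω ∈ Set.Icc (0 : ℝ) 1)
    (hXZ : ∀ i, ∀ᵐ ω ∂μ, |X i ω - Z i ω| ≤ α) {t : ℝ} (ht : 0 ≤ t) :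
    μ.real {ω | ∑ i, Z i ω ≤ ∑ i, μ[X i] - Fintype.card ι * α - t}
      ≤ Real.exp (-2 * t ^ 2 / Fintype.card ι) := by
  refine le_trans (ENNReal.toReal_mono (measure_ne_top _ _) (measure_mono_ae ?_))
    (measureReal_sum_le_sum_integral_sub_le hindep hmeas h01 ht)
  filter_upwards [ae_all_iff.2 hXZ] with ω hω hZ
  have hXZsum : ∑ i, X i ω ≤ ∑ i, Z i ω + Fintype.card ι * α := by
    calc ∑ i, X i ω ≤ ∑ i, (Z i ω + α) :=
          Finset.sum_le_sum fun i _ ↦ by linarith [(abs_le.1 (hω i)).2]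
      _ = ∑ i, Z i ω + Fintype.card ι * α := by simp [Finset.sum_add_distrib]
  change ∑ i, Z i ω ≤ _ at hZ
  change ∑ i, X i ω ≤ _
  linarith

end Hoeffding

lemma one_sub_sum_measureReal_le_measureReal_iInter_compl {Ω ι : Type*} [MeasurableSpace Ω]
    {μ : Measure Ω} [IsProbabilityMeasure μ] [Fintype ι] (A : ι → Set Ω) :
    1 - ∑ i, μ.real (A i) ≤ μ.real (⋂ i, (A i)ᶜ) := by
  have hcover : μ.real Set.univ ≤ μ.real (⋃ i, A i) + μ.real (⋂ i, (A i)ᶜ) := by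
    rw [← Set.compl_iUnion]
    exact (measureReal_mono (Set.union_compl_self _).ge).trans (measureReal_union_le _ _)
  linarith [measureReal_iUnion_fintype_le (μ := μ) A, probReal_univ (μ := μ)]

theorem stmt6_general {Ω : Type*} [MeasurableSpace Ω] (P : Measure Ω) [IsProbabilityMeasure P]
    {Pol : Type*} [Fintype Pol]
    (α : ℝ) (K : ℝ) (N : ℕ) (hN : 0 < N) (ε : ℝ) (hε : α < ε)
    (Y Z : Pol → Fin N → Ω → ℝ)
    (hYmeas : ∀ π n, Measurable (Y π n))
    (hYindep : ∀ π, iIndepFun (Y π) P)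
    (hYid : ∀ π n, IdentDistrib (Y π n) (Y π ⟨0, hN⟩) P P)
    (hY01 : ∀ π n ω, Y π n ω ∈ Set.Icc (0 : ℝ) 1)
    (hYZ : ∀ π n, ∀ᵐ ω ∂P, |Y π n ω - Z π n ω| ≤ α)
    (J : Pol → ℝ) (hJ : ∀ π, J π = ∫ ω, Y π ⟨0, hN⟩ ω ∂P)
    (Jhat : Pol → Ω → ℝ) (hJhat : ∀ π ω, Jhat π ω = (∑ n, Z π n ω) / N)
    (PfN : Ω → Set Pol) (hPfN : ∀ ω, PfN ω = {π | Jhat π ω ≤ K})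
    (hempty : {π : Pol | J π ≤ K + ε} = ∅) :
    1 - 2 * (Fintype.card Pol) * Real.exp (-2 * (ε - α) ^ 2 * N)
      ≤ (P {ω | PfN ω = ∅}).toReal := by
  have hNpos : (0 : ℝ) < N := Nat.cast_pos.2 hN
  have hmean : ∀ π n, P[Y π n] = J π := fun π n ↦ (hJ π).symm ▸ (hYid π n).integral_eq
  have hJ_gt : ∀ π, K + ε < J π := fun π ↦ not_le.1 fun h ↦ hempty.subset h
  -- `Ĵ_N(π) ≤ K` forces the average of the `Y π n` at least `ε - α` below its mean `J π`.
  have hbad : ∀ π, P.real {ω | Jhat π ω ≤ K} ≤ Real.exp (-2 * (ε - α) ^ 2 * N) := by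
    intro π
    calc P.real {ω | Jhat π ω ≤ K}
        ≤ P.real {ω | ∑ n, Z π n ω ≤ ∑ n, P[Y π n] - Fintype.card (Fin N) * α - N * (ε - α)} := by
          refine measureReal_mono fun ω hω ↦ ?_
          simp only [Set.mem_ofPred_eq, hJhat, div_le_iff₀ hNpos, hmean, Finset.sum_const,
            Finset.card_univ, Fintype.card_fin, nsmul_eq_mul] at hω ⊢
          linarith [mul_lt_mul_of_pos_left (hJ_gt π) hNpos]
      _ ≤ Real.exp (-2 * (N * (ε - α)) ^ 2 / Fintype.card (Fin N)) :=
          measureReal_sum_le_sum_integral_sub_le_of_ae_abs_sub_le (hYindep π)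
            (fun n ↦ (hYmeas π n).aemeasurable) (fun n ↦ ae_of_all _ (hY01 π n)) (hYZ π)
            (mul_nonneg hNpos.le (sub_nonneg.2 hε.le))
      _ = Real.exp (-2 * (ε - α) ^ 2 * N) := by
          rw [Fintype.card_fin]
          field_simp
  have hevent : {ω | PfN ω = ∅} = ⋂ π, {ω | Jhat π ω ≤ K}ᶜ := by
    ext ω
    simp [hPfN, Set.eq_empty_iff_forall_notMem]
  -- Only lower tails enter, so the union bound already gives `|Π|` in place of `2 |Π|`.
  calc 1 - 2 * (Fintype.card Pol) * Real.exp (-2 * (ε - α) ^ 2 * N)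
      ≤ 1 - ∑ π, P.real {ω | Jhat π ω ≤ K} := by
        have := Finset.sum_le_sum fun π (_ : π ∈ Finset.univ) ↦ hbad π
        simp only [Finset.sum_const, Finset.card_univ, nsmul_eq_mul] at this
        nlinarith [Real.exp_pos (-2 * (ε - α) ^ 2 * N), (Fintype.card Pol).cast_nonneg (α := ℝ)]
    _ ≤ (P {ω | PfN ω = ∅}).toReal := by
        rw [hevent]
        exact one_sub_sum_measureReal_le_measureReal_iInter_compl _

/-- Remark following Theorem 1: if the `ε`-feasible policy set `{π : J(π) ≤ K + ε}` is
empty for some `ε` exceeding the truncation error `α`, then the estimated feasible set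
`Π_{f,N}` is empty with probability at least `1 - 2 |Π| exp(-2(ε-α)² N)`. -/
theorem stmt6 {Ω : Type*} [MeasurableSpace Ω] (P : Measure Ω) [IsProbabilityMeasure P]
    {Pol : Type*} [Fintype Pol] [Nonempty Pol]
    (α : ℝ) (hα : 0 ≤ α) (K : ℝ) (N : ℕ) (hN : 0 < N) (ε : ℝ) (hε : α < ε)
    (Y Z : Pol → Fin N → Ω → ℝ)
    (hYmeas : ∀ π n, Measurable (Y π n)) (hZmeas : ∀ π n, Measurable (Z π n))
    (hYindep : ∀ π, iIndepFun (Y π) P)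
    (hYid : ∀ π n, IdentDistrib (Y π n) (Y π ⟨0, hN⟩) P P)
    (hY01 : ∀ π n ω, Y π n ω ∈ Set.Icc (0 : ℝ) 1)
    (hZ01 : ∀ π n ω, Z π n ω ∈ Set.Icc (0 : ℝ) 1)
    (hYZ : ∀ π n, ∀ᵐ ω ∂P, |Y π n ω - Z π n ω| ≤ α)
    (J : Pol → ℝ) (hJ : ∀ π, J π = ∫ ω, Y π ⟨0, hN⟩ ω ∂P)
    (Jhat : Pol → Ω → ℝ) (hJhat : ∀ π ω, Jhat π ω = (∑ n, Z π n ω) / N)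
    (PfN : Ω → Set Pol) (hPfN : ∀ ω, PfN ω = {π | Jhat π ω ≤ K})
    (hempty : {π : Pol | J π ≤ K + ε} = ∅) :
    1 - 2 * (Fintype.card Pol) * Real.exp (-2 * (ε - α) ^ 2 * N)
      ≤ (P {ω | PfN ω = ∅}).toReal :=
  stmt6_general P α K N hN ε hε Y Z hYmeas hYindep hYid hY01 hYZ J hJ Jhat hJhat PfN hPfN hempty
end

section
/- Let (Ω, ℱ, P) be a probability space, S a nonempty finite set, r ≥ 0, and N ≥ 1 a natural number. For each π ∈ S, let Y^π_1, …, Y^π_N be independent identically distributed random variables taking values in [0,1] with mean V(π) := E[Y^π_1], and let Z^π_1, …, Z^π_N be random variables taking values in [0,1] such that 0 ≤ Y^π_n − Z^π_n ≤ r almost surely for every n. Define V̂_N(π) := (1/N) ∑_{n=1}^N Z^π_n. Suppose π* ∈ S is the unique maximizer of V over S, and for π ∈ S \ {π*} set Δ^π := V(π*) − V(π); assume Δ^π ≥ 2r for all π ∈ S \ {π*}. Then P(∃ π ∈ S \ {π*}, V̂_N(π) ≥ V̂_N(π*)) ≤ ∑_{π ∈ S \ {π*}} 2 · exp(−2(Δ^π/2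 − r)² N). -/
/-!
Off a null set every truncation error lies in `[0, r]`, so a selection error for `π` forces
`∑ₙ Y^{π*}_n ≤ ∑ₙ Y^π_n + N r`. As the means differ by `Δ^π = 2t + 2r` with `t = Δ^π/2 - r ≥ 0`,
either the samples of `π` exceed their mean by `N t` or those of `π*` fall short of theirs by
`N t`. Hoeffding's inequality bounds each of these by `exp (-2 t² N)`, and a union bound over
`π ≠ π*` concludes.
-/

open MeasureTheory ProbabilityTheory Finset

section Hoeffding

open Real

variable {Ω ι : Type*} [MeasurableSpace Ω] {P : Measure Ω} [Fintype ι] {X : ι → Ω → ℝ}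
  {a b ε : ℝ}

theorem measureReal_card_mul_le_sum_sub_integral_le (hindep : iIndepFun X P)
    (hmeas : ∀ i, AEMeasurable (X i) P) (hX : ∀ i, ∀ᵐ ω ∂P, X i ω ∈ Set.Icc a b) (hε : 0 ≤ ε) :
    P.real {ω | Fintype.card ι * ε ≤ ∑ i, (X i ω - P[X i])}
      ≤ exp (-2 * Fintype.card ι * ε ^ 2 / (b - a) ^ 2) := by
  have := hindep.isProbabilityMeasure
  have hcentered : iIndepFun (fun i ω ↦ X i ω - P[X i]) P :=
    hindep.comp (fun i (x : ℝ) ↦ x - ∫ ω, X i ω ∂P) fun _ ↦ measurable_id.sub_const _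
  refine (HasSubgaussianMGF.measure_sum_ge_le_of_iIndepFun hcentered
    (fun i _ ↦ hasSubgaussianMGF_of_mem_Icc (hmeas i) (hX i)) (by positivity)).trans_eq ?_
  rcases eq_or_ne (Fintype.card ι : ℝ) 0 with hcard | hcard
  · simp [hcard]
  · congr 1
    simp only [sum_const, card_univ, nsmul_eq_mul, NNReal.coe_mul, NNReal.coe_natCast,
      NNReal.coe_pow, NNReal.coe_div, coe_nnnorm, Real.norm_eq_abs, NNReal.coe_ofNat, div_pow,
      sq_abs]
    field_simp

theorem measureReal_sum_sub_integral_le_neg_card_mul_le (hindep : iIndepFun X P)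
    (hmeas : ∀ i, AEMeasurable (X i) P) (hX : ∀ i, ∀ᵐ ω ∂P, X i ω ∈ Set.Icc a b) (hε : 0 ≤ ε) :
    P.real {ω | ∑ i, (X i ω - P[X i]) ≤ -(Fintype.card ι * ε)}
      ≤ exp (-2 * Fintype.card ι * ε ^ 2 / (b - a) ^ 2) := by
  have hneg := measureReal_card_mul_le_sum_sub_integral_le (X := fun i ω ↦ -X i ω)
    (a := -b) (b := -a) (hindep.comp (fun _ x ↦ -x) fun _ ↦ measurable_neg)
    (fun i ↦ (hmeas i).neg) (fun i ↦ (hX i).mono fun ω h ↦ ⟨neg_le_neg h.2, neg_le_neg h.1⟩) hε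
  convert hneg using 2
  · ext ω
    simp only [Set.mem_ofPred_eq, integral_neg, sum_sub_distrib, sum_neg_distrib]
    constructor <;> intro h <;> linarith
  · ring

end Hoeffding

theorem le_sum_sub_or_sum_sub_le_of_truncated_sum_le {ι : Type*} [Fintype ι]
    {y z y' z' : ι → ℝ} {m m' r t : ℝ} (hz : ∀ i, 0 ≤ y i - z i) (hz' : ∀ i, y' i - z' i ≤ r)
    (hgap : r + 2 * t ≤ m' - m) (h : ∑ i, z' i ≤ ∑ i, z i) :
    Fintype.card ι * t ≤ ∑ i, (y i - m) ∨ ∑ i, (y' i - m') ≤ -(Fintype.card ι * t) := by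
  have hy : ∑ i, z i ≤ ∑ i, y i := sum_le_sum fun i _ ↦ sub_nonneg.mp (hz i)
  have hy' : ∑ i, (y' i - r) ≤ ∑ i, z' i := sum_le_sum fun i _ ↦ by linarith [hz' i]
  have hcard : (Fintype.card ι : ℝ) * (r + 2 * t) ≤ Fintype.card ι * (m' - m) :=
    mul_le_mul_of_nonneg_left hgap (Nat.cast_nonneg _)
  simp only [sum_sub_distrib, sum_const, card_univ, nsmul_eq_mul] at hy' ⊢
  by_contra! hcon
  linarith

theorem stmt8_general {Ω : Type*} [MeasurableSpace Ω] (P : Measure Ω) [IsProbabilityMeasure P]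
    {S : Type*} [Fintype S] [DecidableEq S]
    (r : ℝ) (hr : 0 ≤ r) (N : ℕ) (hN : 0 < N)
    (Y Z : S → Fin N → Ω → ℝ)
    (hYmeas : ∀ π n, Measurable (Y π n))
    (hYindep : ∀ π, iIndepFun (Y π) P)
    (hYid : ∀ π n, IdentDistrib (Y π n) (Y π ⟨0, hN⟩) P P)
    (hY01 : ∀ π n ω, Y π n ω ∈ Set.Icc (0 : ℝ) 1)
    (hYZ : ∀ π n, ∀ᵐ ω ∂P, 0 ≤ Y π n ω - Z π n ω ∧ Y π n ω - Z π n ω ≤ r)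
    (V : S → ℝ) (hV : ∀ π, V π = ∫ ω, Y π ⟨0, hN⟩ ω ∂P)
    (Vhat : S → Ω → ℝ) (hVhat : ∀ π ω, Vhat π ω = (∑ n, Z π n ω) / N)
    (πstar : S)
    (Δ : S → ℝ) (hΔ : ∀ π, Δ π = V πstar - V π)
    (hgap : ∀ π, π ≠ πstar → 2 * r ≤ Δ π) :
    (P {ω | ∃ π, π ≠ πstar ∧ Vhat π ω ≥ Vhat πstar ω}).toReal
      ≤ ∑ π ∈ Finset.univ.erase πstar, 2 * Real.exp (-2 * (Δ π / 2 - r) ^ 2 * N) := by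
  have hmean : ∀ π n, P[Y π n] = V π := fun π n ↦ (hV π).symm ▸ (hYid π n).integral_eq
  have hYZ_all : ∀ᵐ ω ∂P, ∀ π n, 0 ≤ Y π n ω - Z π n ω ∧ Y π n ω - Z π n ω ≤ r :=
    ae_all_iff.2 fun π ↦ ae_all_iff.2 (hYZ π)
  have hbound : ∀ π ≠ πstar,
      P.real {ω | Vhat πstar ω ≤ Vhat π ω} ≤ 2 * Real.exp (-2 * (Δ π / 2 - r) ^ 2 * N) := by
    intro π hπ
    set t := Δ π / 2 - r with ht_def
    have hsub : ({ω | Vhat πstar ω ≤ Vhat π ω} : Set Ω) ≤ᵐ[P]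
        ({ω | N * t ≤ ∑ n, (Y π n ω - V π)} ∪
          {ω | ∑ n, (Y πstar n ω - V πstar) ≤ -(N * t)} : Set Ω) := by
      filter_upwards [hYZ_all] with ω hω hsel
      change Vhat πstar ω ≤ Vhat π ω at hsel
      rw [hVhat, hVhat, div_le_div_iff_of_pos_right (by positivity)] at hsel
      have h := le_sum_sub_or_sum_sub_le_of_truncated_sum_le (m := V π) (m' := V πstar) (t := t)
        (fun n ↦ (hω π n).1) (fun n ↦ (hω πstar n).2) (by linarith [hΔ π, ht_def]) hsel
      rwa [Fintype.card_fin] at h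
    have ht : 0 ≤ t := by linarith [hgap π hπ, ht_def]
    have hupper := measureReal_card_mul_le_sum_sub_integral_le (hYindep π)
      (fun n ↦ (hYmeas π n).aemeasurable) (fun n ↦ ae_of_all _ (hY01 π n)) ht
    have hlower := measureReal_sum_sub_integral_le_neg_card_mul_le (hYindep πstar)
      (fun n ↦ (hYmeas πstar n).aemeasurable) (fun n ↦ ae_of_all _ (hY01 πstar n)) ht
    simp only [Fintype.card_fin, hmean, sub_zero, one_pow, div_one] at hupper hlower
    calc P.real {ω | Vhat πstar ω ≤ Vhat π ω}
        ≤ P.real ({ω | N * t ≤ ∑ n, (Y π n ω - V π)} ∪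
            {ω | ∑ n, (Y πstar n ω - V πstar) ≤ -(N * t)}) :=
          ENNReal.toReal_mono (measure_ne_top _ _) (measure_mono_ae hsub)
      _ ≤ _ := (measureReal_union_le _ _).trans (add_le_add hupper hlower)
      _ = 2 * Real.exp (-2 * t ^ 2 * N) := by ring_nf
  calc P.real {ω | ∃ π, π ≠ πstar ∧ Vhat π ω ≥ Vhat πstar ω}
      = P.real (⋃ π ∈ univ.erase πstar, {ω | Vhat πstar ω ≤ Vhat π ω}) := by
        congr 1; ext ω; simp [and_comm]
    _ ≤ ∑ π ∈ univ.erase πstar, P.real {ω | Vhat πstar ω ≤ Vhat π ω} :=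
        measureReal_biUnion_finset_le _ _
    _ ≤ _ := sum_le_sum fun π hπ ↦ hbound π (ne_of_mem_erase hπ)

/-- Core selection-error bound inside Theorem 2: `π*` is the unique maximizer of the true
value `V` over the finite set `S`, `V̂_N(π)` is the sample mean of `N` truncated value
samples `Z^π_n` (one-sided truncation error at most `r` from i.i.d. samples `Y^π_n` with
mean `V(π)`), and each gap `Δ^π = V(π*) - V(π)` is at least `2r`; then the probability
that some suboptimal sample mean reaches that of `π*` is at most
`∑_{π ≠ π*} 2 exp(-2(Δ^π/2 - r)² N)`. -/
theorem stmt8 {Ω : Type*} [MeasurableSpace Ω] (P : Measure Ω) [IsProbabilityMeasure P]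
    {S : Type*} [Fintype S] [Nonempty S] [DecidableEq S]
    (r : ℝ) (hr : 0 ≤ r) (N : ℕ) (hN : 0 < N)
    (Y Z : S → Fin N → Ω → ℝ)
    (hYmeas : ∀ π n, Measurable (Y π n)) (hZmeas : ∀ π n, Measurable (Z π n))
    (hYindep : ∀ π, iIndepFun (Y π) P)
    (hYid : ∀ π n, IdentDistrib (Y π n) (Y π ⟨0, hN⟩) P P)
    (hY01 : ∀ π n ω, Y π n ω ∈ Set.Icc (0 : ℝ) 1)
    (hZ01 : ∀ π n ω, Z π n ω ∈ Set.Icc (0 : ℝ) 1)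
    (hYZ : ∀ π n, ∀ᵐ ω ∂P, 0 ≤ Y π n ω - Z π n ω ∧ Y π n ω - Z π n ω ≤ r)
    (V : S → ℝ) (hV : ∀ π, V π = ∫ ω, Y π ⟨0, hN⟩ ω ∂P)
    (Vhat : S → Ω → ℝ) (hVhat : ∀ π ω, Vhat π ω = (∑ n, Z π n ω) / N)
    (πstar : S) (hπstar : ∀ π, π ≠ πstar → V π < V πstar)
    (Δ : S → ℝ) (hΔ : ∀ π, Δ π = V πstar - V π)
    (hgap : ∀ π, π ≠ πstar → 2 * r ≤ Δ π) :
    (P {ω | ∃ π, π ≠ πstar ∧ Vhat π ω ≥ Vhat πstar ω}).toReal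
      ≤ ∑ π ∈ Finset.univ.erase πstar, 2 * Real.exp (-2 * (Δ π / 2 - r) ^ 2 * N) :=
  stmt8_general P r hr N hN Y Z hYmeas hYindep hYid hY01 hYZ V hV Vhat hVhat πstar Δ hΔ hgap
end

section
/- Let (Ω, ℱ, P) be a probability space, Π a nonempty finite set, α ≥ 0, K ∈ ℝ, N ≥ 1 a natural number, ε > α, and V : Π → ℝ a function. For each π ∈ Π, let Y^π_1, …, Y^π_N be independent identically distributed random variables taking values in [0,1] with mean J(π) := E[Y^π_1], and Z^π_1, …, Z^π_N random variables taking values in [0,1] with |Y^π_n − Z^π_n| ≤ α almost surely for every n. Define Ĵ_N(π) := (1/N) ∑_{n=1}^N Z^π_n, Π_{f,N} := {π ∈ Π : Ĵ_N(π) ≤ K}, and for δ ∈ ℝ, Π_f^δ := {π ∈ Π : J(π) ≤ K + δ}. Assume Π_f^{−ε} is nonempty. Then with probability at least 1 − 2·|Π|·exp(−2(ε − α)² N), the set Π_{f,N} is nonempty and every π* ∈ Π_{f,N} with V(π*) = max_{π ∈ Π_{f,N}} V(π) satisfies max_{π ∈ Π_f^{−ε}} V(π) ≤ V(π*) ≤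 max_{π ∈ Π_f^ε} V(π). -/
/-!
By Hoeffding's inequality and a union bound over the finitely many policies, with the stated
probability every empirical mean of the `Y π` lies within `ε - α` of `J π`; the truncation moves
it by at most `α`, so `|Ĵ_N(π) - J(π)| ≤ ε` for every `π`. Then `Π_f^{-ε} ⊆ Π_{f,N} ⊆ Π_f^{ε}`,
and a maximizer of `V` over the middle set dominates `V` on the smaller set and is dominated by
its maximum over the larger one.
-/

open MeasureTheory ProbabilityTheory

namespace ProbabilityTheory.HasSubgaussianMGF

variable {Ω : Type*} [MeasurableSpace Ω] {μ : Measure Ω}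

lemma measureReal_abs_ge_le {X : Ω → ℝ} {c : NNReal} (h : HasSubgaussianMGF X c μ) {ε : ℝ}
    (hε : 0 ≤ ε) : μ.real {ω | ε ≤ |X ω|} ≤ 2 * Real.exp (-ε ^ 2 / (2 * c)) := by
  have hsplit : {ω | ε ≤ |X ω|} = {ω | ε ≤ X ω} ∪ {ω | ε ≤ (-X) ω} := by
    ext ω
    exact le_abs (b := X ω)
  rw [hsplit]
  linarith [measureReal_union_le (μ := μ) {ω | ε ≤ X ω} {ω | ε ≤ (-X) ω},
    h.measure_ge_le hε, h.neg.measure_ge_le hε]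

end ProbabilityTheory.HasSubgaussianMGF

section

variable {Ω ι : Type*} [MeasurableSpace Ω] {μ : Measure Ω} [Fintype ι]

open Fintype

lemma measureReal_abs_sum_sub_ge_le_of_mem_Icc [IsProbabilityMeasure μ] {X : ι → Ω → ℝ}
    (hmeas : ∀ i, Measurable (X i)) (hindep : iIndepFun X μ)
    (h01 : ∀ i ω, X i ω ∈ Set.Icc (0 : ℝ) 1) {m : ℝ} (hm : ∀ i, μ[X i] = m) {s : ℝ}
    (hs : 0 ≤ s) :
    μ.real {ω | card ι * s ≤ |∑ i, X i ω - card ι * m|}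
      ≤ 2 * Real.exp (-2 * s ^ 2 * card ι) := by
  have hcentered : iIndepFun (fun i ω ↦ X i ω - m) μ :=
    hindep.comp (fun _ x ↦ x - m) fun _ ↦ measurable_id.sub_const m
  have hsum := HasSubgaussianMGF.sum_of_iIndepFun hcentered (s := Finset.univ) fun i _ ↦ by
    simpa [hm i] using hasSubgaussianMGF_of_mem_Icc (μ := μ) (X := X i) (hmeas i).aemeasurable
      (ae_of_all _ (h01 i))
  have htail := hsum.measureReal_abs_ge_le (ε := card ι * s) (by positivity)
  simp only [Finset.sum_sub_distrib, Finset.sum_const, Finset.card_univ, nsmul_eq_mul] at htail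
  convert htail using 3
  push_cast
  rcases eq_or_ne (card ι : ℝ) 0 with hcard | hcard
  · simp [hcard]
  · field_simp

lemma abs_sum_div_card_sub_le [Nonempty ι] {y z : ι → ℝ} {m α s : ℝ}
    (hyz : ∀ i, |y i - z i| ≤ α) (hy : |∑ i, y i - card ι * m| ≤ card ι * s) :
    |(∑ i, z i) / card ι - m| ≤ α + s := by
  have hcard : (0 : ℝ) < card ι := by exact_mod_cast card_pos
  have hzy : |∑ i, z i - ∑ i, y i| ≤ card ι * α := by
    rw [← Finset.sum_sub_distrib]
    calc |∑ i, (z i - y i)| ≤ ∑ i, |z i - y i| := Finset.abs_sum_le_sum_abs _ _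
      _ ≤ ∑ _i : ι, α := Finset.sum_le_sum fun i _ ↦ abs_sub_comm (y i) (z i) ▸ hyz i
      _ = card ι * α := by simp
  have hz : |∑ i, z i - card ι * m| ≤ card ι * (α + s) := by
    calc |∑ i, z i - card ι * m| ≤ |∑ i, z i - ∑ i, y i| + |∑ i, y i - card ι * m| :=
          abs_sub_le _ _ _
      _ ≤ card ι * (α + s) := by linarith
  have hrewrite : (∑ i, z i) / card ι - m = (∑ i, z i - card ι * m) / card ι := by
    field_simp
  rw [hrewrite, abs_div, abs_of_pos hcard, div_le_iff₀ hcard]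
  linarith

lemma one_sub_sum_measureReal_le_of_ae [IsProbabilityMeasure μ] {B : ι → Set Ω} {T : Set Ω}
    (h : ∀ᵐ ω ∂μ, (∀ i, ω ∉ B i) → ω ∈ T) : 1 - ∑ i, μ.real (B i) ≤ μ.real T := by
  have hTc : μ.real Tᶜ ≤ μ.real (⋃ i, B i) := by
    refine ENNReal.toReal_mono (measure_ne_top _ _) (measure_mono_ae ?_)
    filter_upwards [h] with ω hω hωT
    by_contra hωB
    exact hωT (hω fun i hi ↦ hωB (Set.mem_iUnion.2 ⟨i, hi⟩))
  have hcover : 1 ≤ μ.real T + μ.real Tᶜ := by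
    simpa only [Set.union_compl_self, probReal_univ] using measureReal_union_le (μ := μ) T Tᶜ
  linarith [measureReal_iUnion_fintype_le (μ := μ) B]

end

lemma sSup_image_le_and_le_sSup_image_of_subset {β : Type*} [Finite β] {V : β → ℝ}
    {A B C : Set β} (hAB : A ⊆ B) (hBC : B ⊆ C) (hA : A.Nonempty) {x : β} (hx : x ∈ B)
    (hmax : ∀ y ∈ B, V y ≤ V x) : sSup (V '' A) ≤ V x ∧ V x ≤ sSup (V '' C) :=
  ⟨csSup_le (hA.image V) (Set.forall_mem_image.2 fun _ hy ↦ hmax _ (hAB hy)),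
    le_csSup (Set.toFinite _).bddAbove ⟨x, hBC hx, rfl⟩⟩

lemma sandwich_of_forall_abs_sub_le {β : Type*} [Finite β] {V J Jhat : β → ℝ} {K ε : ℝ}
    (hne : {x | J x ≤ K + -ε}.Nonempty) (hclose : ∀ x, |Jhat x - J x| ≤ ε) :
    {x | Jhat x ≤ K}.Nonempty ∧ ∀ xs ∈ {x | Jhat x ≤ K}, (∀ x ∈ {x | Jhat x ≤ K}, V x ≤ V xs) →
      sSup (V '' {x | J x ≤ K + -ε}) ≤ V xs ∧ V xs ≤ sSup (V '' {x | J x ≤ K + ε}) := by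
  have hlow : {x | J x ≤ K + -ε} ⊆ {x | Jhat x ≤ K} := fun x (hx : J x ≤ K + -ε) ↦
    show Jhat x ≤ K by linarith [(abs_le.1 (hclose x)).2]
  have hhigh : {x | Jhat x ≤ K} ⊆ {x | J x ≤ K + ε} := fun x (hx : Jhat x ≤ K) ↦
    show J x ≤ K + ε by linarith [(abs_le.1 (hclose x)).1]
  exact ⟨hne.mono hlow, fun _ hxs hmax ↦
    sSup_image_le_and_le_sSup_image_of_subset hlow hhigh hne hxs hmax⟩

theorem stmt10_general {Ω : Type*} [MeasurableSpace Ω] (P : Measure Ω) [IsProbabilityMeasure P]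
    {Pol : Type*} [Fintype Pol]
    (α : ℝ) (K : ℝ) (N : ℕ) (hN : 0 < N) (ε : ℝ) (hε : α < ε)
    (V : Pol → ℝ)
    (Y Z : Pol → Fin N → Ω → ℝ)
    (hYmeas : ∀ π n, Measurable (Y π n))
    (hYindep : ∀ π, iIndepFun (Y π) P)
    (hYid : ∀ π n, IdentDistrib (Y π n) (Y π ⟨0, hN⟩) P P)
    (hY01 : ∀ π n ω, Y π n ω ∈ Set.Icc (0 : ℝ) 1)
    (hYZ : ∀ π n, ∀ᵐ ω ∂P, |Y π n ω - Z π n ω| ≤ α)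
    (J : Pol → ℝ) (hJ : ∀ π, J π = ∫ ω, Y π ⟨0, hN⟩ ω ∂P)
    (Jhat : Pol → Ω → ℝ) (hJhat : ∀ π ω, Jhat π ω = (∑ n, Z π n ω) / N)
    (PfN : Ω → Set Pol) (hPfN : ∀ ω, PfN ω = {π | Jhat π ω ≤ K})
    (Pf : ℝ → Set Pol) (hPf : ∀ δ : ℝ, Pf δ = {π | J π ≤ K + δ})
    (hne : (Pf (-ε)).Nonempty) :
    1 - 2 * (Fintype.card Pol) * Real.exp (-2 * (ε - α) ^ 2 * N)
      ≤ (P {ω | (PfN ω).Nonempty ∧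
            ∀ πstar ∈ PfN ω, (∀ π ∈ PfN ω, V π ≤ V πstar) →
              sSup (V '' Pf (-ε)) ≤ V πstar ∧ V πstar ≤ sSup (V '' Pf ε)}).toReal := by
  have : Nonempty (Fin N) := ⟨⟨0, hN⟩⟩
  have hmean : ∀ π n, P[Y π n] = J π := fun π n ↦ by rw [(hYid π n).integral_eq, hJ]
  set bad : Pol → Set Ω := fun π ↦ {ω | N * (ε - α) ≤ |∑ n, Y π n ω - N * J π|}
  have hbad : ∀ π, P.real (bad π) ≤ 2 * Real.exp (-2 * (ε - α) ^ 2 * N) := fun π ↦ by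
    simpa using measureReal_abs_sum_sub_ge_le_of_mem_Icc (hYmeas π) (hYindep π) (hY01 π)
      (hmean π) (sub_nonneg.2 hε.le)
  have hclose : ∀ᵐ ω ∂P, (∀ π, ω ∉ bad π) → ∀ π, |Jhat π ω - J π| ≤ ε := by
    filter_upwards [ae_all_iff.2 fun π ↦ ae_all_iff.2 (hYZ π)] with ω hYZω hgood π
    have := abs_sum_div_card_sub_le (hYZω π) (by simpa using (not_le.1 (hgood π)).le)
    rw [hJhat]
    simpa using this
  refine le_trans ?_
    (one_sub_sum_measureReal_le_of_ae (B := bad) (hclose.mono fun ω hω hgood ↦ ?_))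
  · calc 1 - 2 * (Fintype.card Pol) * Real.exp (-2 * (ε - α) ^ 2 * N)
        = 1 - ∑ _π : Pol, 2 * Real.exp (-2 * (ε - α) ^ 2 * N) := by
          rw [Finset.sum_const, Finset.card_univ, nsmul_eq_mul]; ring
      _ ≤ 1 - ∑ π, P.real (bad π) := by gcongr with π; exact hbad π
  · rw [Set.mem_ofPred_eq, hPfN, hPf, hPf]
    exact sandwich_of_forall_abs_sub_le (hPf _ ▸ hne) (hω hgood)

/-- Corollary of Theorem 1 used in Theorem 2: on the high-probability sandwich event
(of probability at least `1 - 2 |Π| exp(-2(ε-α)² N)`), the estimated feasible set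
`Π_{f,N}` is nonempty and the value of any true-value maximizer over `Π_{f,N}` is
sandwiched between the optimal `(-ε)`-feasible and `ε`-feasible values. -/
theorem stmt10 {Ω : Type*} [MeasurableSpace Ω] (P : Measure Ω) [IsProbabilityMeasure P]
    {Pol : Type*} [Fintype Pol] [Nonempty Pol]
    (α : ℝ) (hα : 0 ≤ α) (K : ℝ) (N : ℕ) (hN : 0 < N) (ε : ℝ) (hε : α < ε)
    (V : Pol → ℝ)
    (Y Z : Pol → Fin N → Ω → ℝ)
    (hYmeas : ∀ π n, Measurable (Y π n)) (hZmeas : ∀ π n, Measurable (Z π n))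
    (hYindep : ∀ π, iIndepFun (Y π) P)
    (hYid : ∀ π n, IdentDistrib (Y π n) (Y π ⟨0, hN⟩) P P)
    (hY01 : ∀ π n ω, Y π n ω ∈ Set.Icc (0 : ℝ) 1)
    (hZ01 : ∀ π n ω, Z π n ω ∈ Set.Icc (0 : ℝ) 1)
    (hYZ : ∀ π n, ∀ᵐ ω ∂P, |Y π n ω - Z π n ω| ≤ α)
    (J : Pol → ℝ) (hJ : ∀ π, J π = ∫ ω, Y π ⟨0, hN⟩ ω ∂P)
    (Jhat : Pol → Ω → ℝ) (hJhat : ∀ π ω, Jhat π ω = (∑ n, Z π n ω) / N)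
    (PfN : Ω → Set Pol) (hPfN : ∀ ω, PfN ω = {π | Jhat π ω ≤ K})
    (Pf : ℝ → Set Pol) (hPf : ∀ δ : ℝ, Pf δ = {π | J π ≤ K + δ})
    (hne : (Pf (-ε)).Nonempty) :
    1 - 2 * (Fintype.card Pol) * Real.exp (-2 * (ε - α) ^ 2 * N)
      ≤ (P {ω | (PfN ω).Nonempty ∧
            ∀ πstar ∈ PfN ω, (∀ π ∈ PfN ω, V π ≤ V πstar) →
              sSup (V '' Pf (-ε)) ≤ V πstar ∧ V πstar ≤ sSup (V '' Pf ε)}).toReal :=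
  stmt10_general P α K N hN ε hε V Y Z hYmeas hYindep hYid hY01 hYZ J hJ Jhat hJhat PfN hPfN Pf hPf
    hne
end
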